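/- arXiv:2408.06857 — 5 statements merged into one kernel-verified Lean document; each statement's English description precedes it below -/
import Mathlib

section
/- Any 23 pairwise distinct 3-element subsets of {1,2,...,7} have the property that, for every 3-element subset D of {1,...,7}, at least one of them intersects D in at least 2 elements. -/
lemma key_count : ∀ D ∈ (Finset.Icc 1 7).powersetCard 3,
    ((((Finset.Icc 1 7).powersetCard 3)).filter (fun B => (B ∩ D).card ≤ 1)).card ≤ 22 := by
  decide

/-- In the 3/7 lottery, any 23 pairwise distinct 3-element subsets of `{1,…,7}`
guarantee a 2-hit: for every 3-element subset `D` of `{1,…,7}` at least one of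
the 23 blocks meets `D` in at least 2 elements. -/
theorem twentythree_tickets_guarantee_two_hit (F : Finset (Finset ℕ))
    (hF : F ⊆ (Finset.Icc 1 7).powersetCard 3) (hcard : F.card = 23) :
    ∀ D : Finset ℕ, D ⊆ Finset.Icc 1 7 → D.card = 3 →
      ∃ B ∈ F, 2 ≤ (B ∩ D).card := by
  intro D hD hD3
  by_contra h
  push_neg at h
  have hsub : F ⊆ (((Finset.Icc 1 7).powersetCard 3)).filter (fun B => (B ∩ D).card ≤ 1) := by
    intro B hB
    exact Finset.mem_filter.mpr ⟨hF hB, Nat.lt_succ_iff.mp (h B hB)⟩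
  have := Finset.card_le_card hsub
  have hk := key_count D (Finset.mem_powersetCard.mpr ⟨hD, hD3⟩)
  omega
end

section
/- The family of seven blocks {1,2,3}, {2,3,4}, {3,4,5}, {4,5,6}, {5,6,7}, {6,7,1}, {7,1,2} is a (7,3,3,2)-lottery design: every 3-element subset of {1,2,...,7} intersects at least one of these blocks in at least 2 elements. -/
/-- The seven cyclically generated blocks of Section 2.3.2 form a (7,3,3,2)-lottery
design: every 3-element subset of `{1,…,7}` intersects at least one block in at
least 2 elements. -/
theorem seven_block_lottery_design :
    ∀ D : Finset ℕ, D ⊆ Finset.Icc 1 7 → D.card = 3 →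
      ∃ B ∈ ({{1, 2, 3}, {2, 3, 4}, {3, 4, 5}, {4, 5, 6}, {5, 6, 7}, {6, 7, 1},
        {7, 1, 2}} : Finset (Finset ℕ)), 2 ≤ (B ∩ D).card := by
  intro D hsub hcard
  have hD : D ∈ (Finset.Icc 1 7).powersetCard 3 :=
    Finset.mem_powersetCard.mpr ⟨hsub, hcard⟩
  fin_cases hD <;> decide
end

section
/- The family of four blocks {1,2,5}, {3,4,7}, {5,6,2}, {1,2,6} is a (7,3,3,2)-lottery design: every 3-element subset of {1,2,...,7} intersects at least one of these blocks in at least 2 elements. -/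
/-- The minimized four-block family of Section 2.3.2 is a (7,3,3,2)-lottery design:
every 3-element subset of `{1,…,7}` intersects at least one of the blocks
`{1,2,5}, {3,4,7}, {5,6,2}, {1,2,6}` in at least 2 elements. -/
theorem four_block_lottery_design :
    ∀ D : Finset ℕ, D ⊆ Finset.Icc 1 7 → D.card = 3 →
      ∃ B ∈ ({{1, 2, 5}, {3, 4, 7}, {5, 6, 2}, {1, 2, 6}} : Finset (Finset ℕ)),
        2 ≤ (B ∩ D).card := by
  have h : ∀ D ∈ (Finset.Icc 1 7).powersetCard 3,
      ∃ B ∈ ({{1, 2, 5}, {3, 4, 7}, {5, 6, 2}, {1, 2, 6}} : Finset (Finset ℕ)),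
        2 ≤ (B ∩ D).card := by decide
  intro D hsub hcard
  exact h D (Finset.mem_powersetCard.mpr ⟨hsub, hcard⟩)
end

section
/- Every (7,3,3,2)-lottery design has at least 4 blocks: for any family F of at most 3 three-element subsets of {1,2,...,7}, there exists a 3-element subset D of {1,...,7} such that |B ∩ D| ≤ 1 for every B ∈ F. Hence the lottery number L(7,3,3,2) equals 4. -/
def masks : List ℕ := [14, 22, 38, 70, 134, 26, 42, 74, 138, 50, 82, 146, 98, 162, 194, 28, 44, 76, 140, 52, 84, 148, 100, 164, 196, 56, 88, 152, 104, 168, 200, 112, 176, 208, 224]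
def ok (x d : ℕ) : Bool := ((x &&& d) &&& ((x &&& d) - 1)) == 0
def m (s : Finset ℕ) : ℕ := s.sum (2 ^ ·)

set_option maxHeartbeats 8000000 in
theorem key2 : (masks.all fun a => masks.all fun b => masks.all fun c =>
    masks.any fun d => ok a d && ok b d && ok c d) = true := by decide

set_option maxHeartbeats 1000000 in
theorem mem_masks : ∀ B ∈ (Finset.Icc 1 7).powersetCard 3, m B ∈ masks := by decide
set_option maxHeartbeats 1000000 in
theorem inv_masks : ∀ d ∈ masks, ∃ D ∈ (Finset.Icc 1 7).powersetCard 3, m D = d := by decide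
set_option maxHeartbeats 1000000 in
theorem transfer : ∀ B ∈ (Finset.Icc 1 7).powersetCard 3, ∀ D ∈ (Finset.Icc 1 7).powersetCard 3,
    ok (m B) (m D) = true → (B ∩ D).card ≤ 1 := by decide

def F0 : Finset (Finset ℕ) := {{1,2,5},{3,4,7},{2,5,6},{1,2,6}}
theorem F0sub : F0 ⊆ (Finset.Icc 1 7).powersetCard 3 := by decide
theorem F0card : F0.card = 4 := by decide
set_option maxHeartbeats 1000000 in
theorem F0cov : ∀ D ∈ (Finset.Icc 1 7).powersetCard 3, ∃ B ∈ F0, 2 ≤ (B ∩ D).card := by decide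

theorem part1 : ∀ F : Finset (Finset ℕ), F ⊆ (Finset.Icc 1 7).powersetCard 3 → F.card ≤ 3 →
    ∃ D : Finset ℕ, D ⊆ Finset.Icc 1 7 ∧ D.card = 3 ∧
      ∀ B ∈ F, (B ∩ D).card ≤ 1 := by
  intro F hFS hF3
  have hScard : 3 ≤ ((Finset.Icc 1 7).powersetCard 3).card := by decide
  obtain ⟨G, hFG, hGS, hG3⟩ := Finset.exists_subsuperset_card_eq hFS hF3 hScard
  obtain ⟨a, b, c, -, -, -, rfl⟩ := Finset.card_eq_three.mp hG3
  have ha : a ∈ (Finset.Icc 1 7).powersetCard 3 := hGS (by simp)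
  have hb : b ∈ (Finset.Icc 1 7).powersetCard 3 := hGS (by simp)
  have hc : c ∈ (Finset.Icc 1 7).powersetCard 3 := hGS (by simp)
  have h := key2
  rw [List.all_eq_true] at h
  have h := h (m a) (mem_masks a ha)
  rw [List.all_eq_true] at h
  have h := h (m b) (mem_masks b hb)
  rw [List.all_eq_true] at h
  have h := h (m c) (mem_masks c hc)
  rw [List.any_eq_true] at h
  obtain ⟨d, hd, hok⟩ := h
  simp only [Bool.and_eq_true] at hok
  obtain ⟨D, hD, rfl⟩ := inv_masks d hd
  have hDmem := Finset.mem_powersetCard.mp hD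
  refine ⟨D, hDmem.1, hDmem.2, ?_⟩
  intro B hB
  rcases Finset.mem_insert.mp (hFG hB) with rfl | hB'
  · exact transfer B ha D hD hok.1.1
  rcases Finset.mem_insert.mp hB' with rfl | hB''
  · exact transfer B hb D hD hok.1.2
  rw [Finset.mem_singleton] at hB''
  subst hB''
  exact transfer B hc D hD hok.2

/-- `L(7,3,3,2) = 4`: any family of at most 3 three-element blocks of `{1,…,7}`
misses some 3-element draw `D` (every block meets `D` in at most 1 element),
and hence 4 is the least possible number of blocks of a (7,3,3,2)-lottery design. -/
theorem lottery_number_7_3_3_2_eq_four :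
    (∀ F : Finset (Finset ℕ), F ⊆ (Finset.Icc 1 7).powersetCard 3 → F.card ≤ 3 →
      ∃ D : Finset ℕ, D ⊆ Finset.Icc 1 7 ∧ D.card = 3 ∧
        ∀ B ∈ F, (B ∩ D).card ≤ 1) ∧
    IsLeast {v : ℕ | ∃ F : Finset (Finset ℕ), F ⊆ (Finset.Icc 1 7).powersetCard 3 ∧
      (∀ D : Finset ℕ, D ⊆ Finset.Icc 1 7 → D.card = 3 →
        ∃ B ∈ F, 2 ≤ (B ∩ D).card) ∧ F.card = v} 4 := by
  refine ⟨part1, ⟨F0, F0sub, ?_, F0card⟩, ?_⟩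
  · intro D hD hD3
    exact F0cov D (Finset.mem_powersetCard.mpr ⟨hD, hD3⟩)
  · rintro v ⟨F, hFS, hcov, rfl⟩
    by_contra hlt
    push_neg at hlt
    obtain ⟨D, hD1, hD2, hall⟩ := part1 F hFS (by omega)
    obtain ⟨B, hB, h2⟩ := hcov D hD1 hD2
    have := hall B hB
    omega
end

section
/- Let V be a finite set with N elements, let A ⊆ V with |A| = M ≥ 1, and let 1 ≤ v with M + v ≤ N. Then the proportion of v-element subsets of V that intersect A, namely 1 − C(N−M, v)/C(N, v), is at least 1 − (1 − v/N)^M. -/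
lemma choose_step (N v k : ℕ) (hvk : v < k) (hkN : k ≤ N) :
    (k - 1).choose v * N ≤ k.choose v * (N - v) := by
  have hk : 0 < k := lt_of_le_of_lt (Nat.zero_le v) hvk
  apply Nat.le_of_mul_le_mul_right ?_ hk
  have h1 : (k - 1).choose v * k = k.choose v * (k - v) := by
    have := Nat.choose_mul_succ_eq (k - 1) v
    rwa [Nat.sub_add_cancel hk] at this
  calc (k - 1).choose v * N * k = (k - 1).choose v * k * N := by ring
    _ = k.choose v * ((k - v) * N) := by rw [h1]; ring
    _ ≤ k.choose v * ((N - v) * k) := by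
        apply Nat.mul_le_mul_left
        rw [Nat.sub_mul, Nat.sub_mul, Nat.mul_comm k N]
        exact Nat.sub_le_sub_left (Nat.mul_le_mul_left v hkN) _
    _ = k.choose v * (N - v) * k := by ring

lemma choose_pow_le (N v : ℕ) : ∀ M, M + v ≤ N →
    (N - M).choose v * N ^ M ≤ N.choose v * (N - v) ^ M := by
  intro M
  induction M with
  | zero => simp
  | succ M ih =>
    intro h
    have hM : M + v ≤ N := by omega
    have hvk : v < N - M := by omega
    have hkN : N - M ≤ N := Nat.sub_le _ _
    have hk1 : N - (M + 1) = (N - M) - 1 := by omega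
    calc (N - (M + 1)).choose v * N ^ (M + 1)
        = ((N - M - 1).choose v * N) * N ^ M := by rw [hk1]; ring
      _ ≤ ((N - M).choose v * (N - v)) * N ^ M := by
          exact Nat.mul_le_mul_right _ (choose_step N v (N - M) hvk hkN)
      _ = ((N - M).choose v * N ^ M) * (N - v) := by ring
      _ ≤ (N.choose v * (N - v) ^ M) * (N - v) := Nat.mul_le_mul_right _ (ih hM)
      _ = N.choose v * (N - v) ^ (M + 1) := by ring

/-- Equation (13), made rigorous as a lower bound: for `A ⊆ V` with `|A| = M ≥ 1`,
`|V| = N`, `1 ≤ v` and `M + v ≤ N`, the proportion of `v`-element subsets of `V`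
that intersect `A` equals `1 - C(N-M, v)/C(N, v)`, and this is at least
`1 - (1 - v/N)^M`. -/
theorem at_least_one_hit_probability {α : Type*} [DecidableEq α]
    (V A : Finset α) (N M v : ℕ) (hV : V.card = N) (hA : A.card = M) (hAV : A ⊆ V)
    (hM : 1 ≤ M) (hv : 1 ≤ v) (hMv : M + v ≤ N) :
    ((((V.powersetCard v).filter (fun F => (F ∩ A).Nonempty)).card : ℝ)
        / ((V.powersetCard v).card : ℝ)
      = 1 - ((N - M).choose v : ℝ) / (N.choose v : ℝ)) ∧
    1 - (1 - (v : ℝ) / (N : ℝ)) ^ M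
      ≤ 1 - ((N - M).choose v : ℝ) / (N.choose v : ℝ) := by
  have hvN : v ≤ N := by omega
  have hMN : M ≤ N := by omega
  have hN0 : 0 < N := by omega
  have hcpos : 0 < N.choose v := Nat.choose_pos hvN
  constructor
  · -- counting part
    have hcomp : (V.powersetCard v).filter (fun F => ¬ (F ∩ A).Nonempty)
        = (V \ A).powersetCard v := by
      ext F
      simp only [Finset.mem_filter, Finset.mem_powersetCard, Finset.not_nonempty_iff_eq_empty,
        Finset.subset_sdiff, ← Finset.disjoint_iff_inter_eq_empty]
      tauto
    have hcompcard : ((V.powersetCard v).filter (fun F => ¬ (F ∩ A).Nonempty)).card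
        = (N - M).choose v := by
      rw [hcomp, Finset.card_powersetCard, Finset.card_sdiff_of_subset hAV, hV, hA]
    have htot : ((V.powersetCard v).filter (fun F => (F ∩ A).Nonempty)).card
        + ((V.powersetCard v).filter (fun F => ¬ (F ∩ A).Nonempty)).card
        = (V.powersetCard v).card :=
      Finset.card_filter_add_card_filter_not _
    have hcard : (V.powersetCard v).card = N.choose v := by
      rw [Finset.card_powersetCard, hV]
    have hle : (N - M).choose v ≤ N.choose v := Nat.choose_le_choose v (Nat.sub_le _ _)
    have hfc : ((V.powersetCard v).filter (fun F => (F ∩ A).Nonempty)).card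
        = N.choose v - (N - M).choose v := by omega
    rw [hfc, hcard]
    have hc : (N.choose v : ℝ) ≠ 0 := by positivity
    rw [Nat.cast_sub hle]
    field_simp
  · -- bound part
    have hkey := choose_pow_le N v M hMv
    have h1 : (1 : ℝ) - (v : ℝ) / (N : ℝ) = ((N - v : ℕ) : ℝ) / (N : ℝ) := by
      rw [Nat.cast_sub hvN]
      field_simp
    rw [h1, sub_le_sub_iff_left, div_pow]
    rw [div_le_div_iff₀ (by positivity) (by positivity)]
    have := (Nat.cast_le (α := ℝ)).2 hkey
    push_cast at this ⊢
    linarith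
end
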